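/- arXiv:1604.06144 — 5 statements merged into one kernel-verified Lean document; each statement's English description precedes it below -/
import Mathlib

section
/- Let h, g : ℝ_+ → ℝ be strictly monotone functions. For every y ∈ ℝ_+^N with ∑ y_i = L, the cyclic sum ∑_{i=1}^N h(y_i)(g(y_{i+1}) − g(y_i)) (indices mod N) is nonnegative if one of h, g is strictly increasing and the other strictly decreasing, and nonpositive if h and g are both strictly increasing or both strictly decreasing. Moreover the sum equals zero if and only if y_i = L/N for all i. -/
open Finset Set

/-!
Write `σ` for the cyclic shift `i ↦ i + 1`. The cyclic sum is
`∑ h(y i) g(y (σ i)) - ∑ h(y i) g(y i)`, and when `h` and `g` are both increasing the families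
`h ∘ y` and `g ∘ y` monovary, so it is `≤ 0` by the rearrangement inequality; the other sign
patterns follow by replacing `h` or `g` with its negative. In the equality case of the
rearrangement inequality `y` and `y ∘ σ` monovary, which forces `y ∘ σ = y` because then
`∑ (y i - y (σ i))² = 2 (∑ y i ^ 2 - ∑ y i * y (σ i)) = 0`; a function on `Fin N` invariant
under `i ↦ i + 1` is constant.
-/

section Rearrangement

variable {ι : Type*} {s : Set ℝ} {h g : ℝ → ℝ} {y : ι → ℝ}

theorem monovary_comp_of_monotoneOn (hh : MonotoneOn h s) (hg : MonotoneOn g s)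
    (hy : ∀ i, y i ∈ s) : Monovary (h ∘ y) (g ∘ y) := fun i j hij =>
  hh (hy i) (hy j) (le_of_not_gt fun hji => hij.not_ge (hg (hy j) (hy i) hji.le))

theorem Monovary.of_comp_strictMonoOn (hh : StrictMonoOn h s) (hg : StrictMonoOn g s)
    (hy : ∀ i, y i ∈ s) {σ : Equiv.Perm ι} (hyσ : Monovary (h ∘ y) (g ∘ y ∘ σ)) :
    Monovary y (y ∘ σ) := fun i j hij =>
  (hh.le_iff_le (hy i) (hy j)).1 (hyσ (hg (hy (σ i)) (hy (σ j)) hij))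

variable [Fintype ι]

theorem Monovary.comp_perm_eq_self {α : Type*} [CommRing α] [LinearOrder α]
    [IsStrictOrderedRing α] {f : ι → α} {σ : Equiv.Perm ι} (hf : Monovary f (f ∘ σ)) :
    f ∘ σ = f := by
  have hmul : ∑ i, f i * f (σ i) = ∑ i, f i * f i :=
    (monovary_self f).sum_mul_comp_perm_eq_sum_mul_iff.2 hf
  have hsq : ∑ i, f (σ i) * f (σ i) = ∑ i, f i * f i :=
    Equiv.sum_comp σ fun i => f i * f i
  have hzero : ∑ i, (f (σ i) - f i) ^ 2 = 0 := by
    calc ∑ i, (f (σ i) - f i) ^ 2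
        = ∑ i, (f (σ i) * f (σ i) + f i * f i - 2 * (f i * f (σ i))) :=
          Finset.sum_congr rfl fun _ _ => by ring
      _ = 0 := by
          rw [Finset.sum_sub_distrib, Finset.sum_add_distrib, ← Finset.mul_sum, hsq, hmul]
          ring
  funext i
  have := (Finset.sum_eq_zero_iff_of_nonneg fun j _ => sq_nonneg (f (σ j) - f j)).1 hzero i
    (Finset.mem_univ i)
  exact sub_eq_zero.1 (pow_eq_zero_iff two_ne_zero |>.1 this)

def rearrangementGap (h g : ℝ → ℝ) (σ : Equiv.Perm ι) (y : ι → ℝ) : ℝ :=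
  ∑ i, h (y i) * (g (y (σ i)) - g (y i))

variable (σ : Equiv.Perm ι)

theorem rearrangementGap_eq_sub :
    rearrangementGap h g σ y = ∑ i, h (y i) * g (y (σ i)) - ∑ i, h (y i) * g (y i) := by
  simp only [rearrangementGap, mul_sub, Finset.sum_sub_distrib]

theorem rearrangementGap_neg_left : rearrangementGap (fun x => -h x) g σ y =
    -rearrangementGap h g σ y := by
  simp only [rearrangementGap, neg_mul, Finset.sum_neg_distrib]

theorem rearrangementGap_neg_right : rearrangementGap h (fun x => -g x) σ y =
    -rearrangementGap h g σ y := by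
  simp only [rearrangementGap, neg_sub_neg, ← Finset.sum_neg_distrib, ← mul_neg,
    neg_sub]

theorem rearrangementGap_nonpos (hh : MonotoneOn h s) (hg : MonotoneOn g s)
    (hy : ∀ i, y i ∈ s) : rearrangementGap h g σ y ≤ 0 := by
  rw [rearrangementGap_eq_sub, sub_nonpos]
  exact (monovary_comp_of_monotoneOn hh hg hy).sum_mul_comp_perm_le_sum_mul

theorem rearrangementGap_eq_zero_iff (hh : StrictMonoOn h s) (hg : StrictMonoOn g s)
    (hy : ∀ i, y i ∈ s) : rearrangementGap h g σ y = 0 ↔ y ∘ σ = y := by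
  refine ⟨fun hzero => ?_, fun hσ => ?_⟩
  · rw [rearrangementGap_eq_sub, sub_eq_zero] at hzero
    have hyσ := (monovary_comp_of_monotoneOn hh.monotoneOn hg.monotoneOn hy
      ).sum_mul_comp_perm_eq_sum_mul_iff.1 hzero
    exact (hyσ.of_comp_strictMonoOn hh hg hy).comp_perm_eq_self
  · simp [rearrangementGap, show ∀ i, y (σ i) = y i from congrFun hσ]

theorem rearrangementGap_nonneg_of_monotoneOn_of_antitoneOn (hh : MonotoneOn h s)
    (hg : AntitoneOn g s) (hy : ∀ i, y i ∈ s) : 0 ≤ rearrangementGap h g σ y := by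
  have := rearrangementGap_nonpos σ hh hg.neg hy
  rwa [rearrangementGap_neg_right, neg_nonpos] at this

theorem rearrangementGap_nonneg_of_antitoneOn_of_monotoneOn (hh : AntitoneOn h s)
    (hg : MonotoneOn g s) (hy : ∀ i, y i ∈ s) : 0 ≤ rearrangementGap h g σ y := by
  have := rearrangementGap_nonpos σ hh.neg hg hy
  rwa [rearrangementGap_neg_left, neg_nonpos] at this

theorem rearrangementGap_nonpos_of_antitoneOn (hh : AntitoneOn h s) (hg : AntitoneOn g s)
    (hy : ∀ i, y i ∈ s) : rearrangementGap h g σ y ≤ 0 := by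
  have := rearrangementGap_nonpos σ hh.neg hg.neg hy
  rwa [rearrangementGap_neg_left, rearrangementGap_neg_right, neg_neg] at this

theorem rearrangementGap_eq_zero_iff_of_strictMonoOn_or_strictAntiOn
    (hh : StrictMonoOn h s ∨ StrictAntiOn h s) (hg : StrictMonoOn g s ∨ StrictAntiOn g s)
    (hy : ∀ i, y i ∈ s) : rearrangementGap h g σ y = 0 ↔ y ∘ σ = y := by
  rcases hh with hh | hh <;> rcases hg with hg | hg
  · exact rearrangementGap_eq_zero_iff σ hh hg hy
  · have := rearrangementGap_eq_zero_iff σ hh hg.neg hy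
    rwa [rearrangementGap_neg_right, neg_eq_zero] at this
  · have := rearrangementGap_eq_zero_iff σ hh.neg hg hy
    rwa [rearrangementGap_neg_left, neg_eq_zero] at this
  · have := rearrangementGap_eq_zero_iff σ hh.neg hg.neg hy
    rwa [rearrangementGap_neg_left, rearrangementGap_neg_right, neg_neg] at this

end Rearrangement

open Fin.NatCast in
theorem Fin.comp_addRight_one_eq_self_iff {α : Type*} [Field α] [CharZero α] {N : ℕ} [NeZero N]
    (y : Fin N → α) : y ∘ Equiv.addRight 1 = y ↔ ∀ i, y i = (∑ j, y j) / N := by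
  constructor
  · intro hy
    have hcast (k : ℕ) : y (k : Fin N) = y 0 := by
      induction k with
      | zero => simp
      | succ k ih => rw [Nat.cast_succ, ← ih]; exact congrFun hy k
    have hconst (i : Fin N) : y i = y 0 := by simpa using hcast i.val
    have hN : (N : α) ≠ 0 := Nat.cast_ne_zero.2 (NeZero.ne N)
    intro i
    simp only [hconst, Finset.sum_const, Finset.card_univ, Fintype.card_fin, nsmul_eq_mul]
    field_simp
  · intro hy
    funext i
    exact (hy (i + 1)).trans (hy i).symm

theorem stmt_4_general (N : ℕ) [NeZero N] (L : ℝ)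
    (h g : ℝ → ℝ)
    (y : Fin N → ℝ) (hy : ∀ i, 0 ≤ y i) (hsum : ∑ i, y i = L)
    (hmono : StrictMonoOn h (Ici (0 : ℝ)) ∨ StrictAntiOn h (Ici (0 : ℝ)))
    (gmono : StrictMonoOn g (Ici (0 : ℝ)) ∨ StrictAntiOn g (Ici (0 : ℝ))) :
    (((StrictMonoOn h (Ici (0 : ℝ)) ∧ StrictAntiOn g (Ici (0 : ℝ))) ∨
      (StrictAntiOn h (Ici (0 : ℝ)) ∧ StrictMonoOn g (Ici (0 : ℝ)))) →
        0 ≤ ∑ i, h (y i) * (g (y (i + 1)) - g (y i))) ∧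
    (((StrictMonoOn h (Ici (0 : ℝ)) ∧ StrictMonoOn g (Ici (0 : ℝ))) ∨
      (StrictAntiOn h (Ici (0 : ℝ)) ∧ StrictAntiOn g (Ici (0 : ℝ)))) →
        ∑ i, h (y i) * (g (y (i + 1)) - g (y i)) ≤ 0) ∧
    ((∑ i, h (y i) * (g (y (i + 1)) - g (y i)) = 0) ↔ ∀ i, y i = L / N) := by
  have hgap : ∑ i, h (y i) * (g (y (i + 1)) - g (y i))
      = rearrangementGap h g (Equiv.addRight 1) y := rfl
  rw [hgap]
  refine ⟨?_, ?_, ?_⟩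
  · rintro (⟨hh, hg⟩ | ⟨hh, hg⟩)
    · exact rearrangementGap_nonneg_of_monotoneOn_of_antitoneOn _ hh.monotoneOn hg.antitoneOn hy
    · exact rearrangementGap_nonneg_of_antitoneOn_of_monotoneOn _ hh.antitoneOn hg.monotoneOn hy
  · rintro (⟨hh, hg⟩ | ⟨hh, hg⟩)
    · exact rearrangementGap_nonpos _ hh.monotoneOn hg.monotoneOn hy
    · exact rearrangementGap_nonpos_of_antitoneOn _ hh.antitoneOn hg.antitoneOn hy
  · rw [rearrangementGap_eq_zero_iff_of_strictMonoOn_or_strictAntiOn _ hmono gmono hy,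
      Fin.comp_addRight_one_eq_self_iff, hsum]

theorem stmt_4 (N : ℕ) [NeZero N] (L : ℝ) (hL : 0 < L)
    (h g : ℝ → ℝ)
    (y : Fin N → ℝ) (hy : ∀ i, 0 ≤ y i) (hsum : ∑ i, y i = L)
    (hmono : StrictMonoOn h (Ici (0 : ℝ)) ∨ StrictAntiOn h (Ici (0 : ℝ)))
    (gmono : StrictMonoOn g (Ici (0 : ℝ)) ∨ StrictAntiOn g (Ici (0 : ℝ))) :
    (((StrictMonoOn h (Ici (0 : ℝ)) ∧ StrictAntiOn g (Ici (0 : ℝ))) ∨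
      (StrictAntiOn h (Ici (0 : ℝ)) ∧ StrictMonoOn g (Ici (0 : ℝ)))) →
        0 ≤ ∑ i, h (y i) * (g (y (i + 1)) - g (y i))) ∧
    (((StrictMonoOn h (Ici (0 : ℝ)) ∧ StrictMonoOn g (Ici (0 : ℝ))) ∨
      (StrictAntiOn h (Ici (0 : ℝ)) ∧ StrictAntiOn g (Ici (0 : ℝ)))) →
        ∑ i, h (y i) * (g (y (i + 1)) - g (y i)) ≤ 0) ∧
    ((∑ i, h (y i) * (g (y (i + 1)) - g (y i)) = 0) ↔ ∀ i, y i = L / N) :=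
  stmt_4_general N L h g y hy hsum hmono gmono
end

section
/- For y ∈ ℝ_{++}^N and m > 0, define f(y,m) = m ∑_{i=1}^N y_i^{m-1}(y_{i+1}^m − y_i^m) with indices mod N. Then f(y,m) ≤ 0 when m > 1 and f(y,m) ≥ 0 when m ∈ (0,1), with equality in each case if and only if all y_i are equal. -/
/-!
Write `f = y ^ (m - 1)` and `g = y ^ m`. The sum is `∑ f i * g (i + 1) - ∑ f i * g i`, and
`i ↦ i + 1` permutes the indices. For `m > 1` both `f` and `g` increase with `y`, so the
rearrangement inequality makes the sum nonpositive; for `0 < m < 1` the function `f` decreases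
with `y` and the inequality reverses. In the equality case of the rearrangement inequality `f`
and `g ∘ (· + 1)` are similarly ordered, hence so are `g` and `g ∘ (· + 1)`; comparing
`∑ g i * g (i + 1)` with `∑ g i ^ 2` then gives `g (i + 1) = g i`, so `y` is constant.
-/

open Finset

variable {ι R α β : Type*}

theorem monovary_self_comp_perm_iff [Fintype ι] [CommRing R] [LinearOrder R]
    [IsStrictOrderedRing R] {f : ι → R} {σ : Equiv.Perm ι} :
    Monovary f (f ∘ σ) ↔ ∀ i, f (σ i) = f i := by
  refine ⟨fun h ↦ ?_, fun h ↦ ?_⟩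
  · have hsum : ∑ i, f i * f (σ i) = ∑ i, f i ^ 2 := by
      simpa only [← sq] using (monovary_self f).sum_mul_comp_perm_eq_sum_mul_iff.2 h
    -- `σ` permutes the summands of `∑ f²`, so `∑ (f ∘ σ - f)² = 2 (∑ f² - ∑ f (f ∘ σ))`.
    have hsq : ∑ i, (f (σ i) - f i) ^ 2 = 0 := by
      have hperm : ∑ i, f (σ i) ^ 2 = ∑ i, f i ^ 2 := Equiv.sum_comp σ fun i ↦ f i ^ 2
      simp only [sub_sq, sum_add_distrib, sum_sub_distrib, hperm, mul_assoc, ← mul_sum,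
        mul_comm (f (σ _)), hsum]
      ring
    intro i
    have := (sum_eq_zero_iff_of_nonneg fun i _ ↦ sq_nonneg (f (σ i) - f i)).1 hsq i (mem_univ i)
    exact sub_eq_zero.1 (pow_eq_zero_iff two_ne_zero |>.1 this)
  · rw [show f ∘ σ = f from funext h]
    exact monovary_self f

theorem StrictMonoOn.monovary_comp_left_iff [LinearOrder α] [Preorder β] [Preorder R]
    {φ : α → R} {s : Set α} {f : ι → α} {g : ι → β} (hφ : StrictMonoOn φ s)
    (hf : ∀ i, f i ∈ s) : Monovary (φ ∘ f) g ↔ Monovary f g :=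
  forall₂_congr fun i j ↦ imp_congr_right fun _ ↦ hφ.le_iff_le (hf i) (hf j)

namespace Fin

variable {N : ℕ} [NeZero N]

open Fin.NatCast in
theorem forall_apply_add_one_eq_iff {f : Fin N → β} :
    (∀ i, f (i + 1) = f i) ↔ ∀ i j, f i = f j := by
  refine ⟨fun h i j ↦ ?_, fun h i ↦ h _ _⟩
  have := (show Function.Periodic f 1 from h).nsmul (j - i).val i
  rw [nsmul_one, Fin.cast_val_eq_self, add_sub_cancel] at this
  exact this.symm

variable [CommRing R]

theorem sum_mul_sub_add_one_eq_sum_mul_comp_perm_sub (φ ψ : α → R) (y : Fin N → α) :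
    ∑ i, φ (y i) * (ψ (y (i + 1)) - ψ (y i)) =
      ∑ i, (φ ∘ y) i * (ψ ∘ y) (Equiv.addRight 1 i) - ∑ i, (φ ∘ y) i * (ψ ∘ y) i := by
  simp [mul_sub]

variable [LinearOrder R] [IsStrictOrderedRing R] [LinearOrder α] {s : Set α} {φ ψ : α → R}
  {y : Fin N → α}

theorem sum_mul_sub_add_one_nonpos (hφ : MonotoneOn φ s) (hψ : MonotoneOn ψ s)
    (hy : ∀ i, y i ∈ s) : ∑ i, φ (y i) * (ψ (y (i + 1)) - ψ (y i)) ≤ 0 := by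
  have hfg : Monovary (φ ∘ y) (ψ ∘ y) := fun i j hij ↦
    hφ (hy i) (hy j) (hψ.reflect_lt (hy i) (hy j) hij).le
  rw [sum_mul_sub_add_one_eq_sum_mul_comp_perm_sub, sub_nonpos]
  exact hfg.sum_mul_comp_perm_le_sum_mul

theorem sum_mul_sub_add_one_eq_zero_iff_of_strictMonoOn (hφ : StrictMonoOn φ s)
    (hψ : StrictMonoOn ψ s) (hy : ∀ i, y i ∈ s) :
    ∑ i, φ (y i) * (ψ (y (i + 1)) - ψ (y i)) = 0 ↔ ∀ i j, y i = y j := by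
  have hφψ (g : Fin N → R) : Monovary (φ ∘ y) g ↔ Monovary (ψ ∘ y) g :=
    (hφ.monovary_comp_left_iff hy).trans (hψ.monovary_comp_left_iff hy).symm
  have hfg : Monovary (φ ∘ y) (ψ ∘ y) := (hφψ _).2 (monovary_self _)
  rw [sum_mul_sub_add_one_eq_sum_mul_comp_perm_sub, sub_eq_zero,
    hfg.sum_mul_comp_perm_eq_sum_mul_iff, hφψ, monovary_self_comp_perm_iff]
  exact forall_apply_add_one_eq_iff.trans
    (forall₂_congr fun i j ↦ hψ.injOn.eq_iff (hy i) (hy j))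

theorem sum_mul_sub_add_one_nonneg (hφ : AntitoneOn φ s) (hψ : MonotoneOn ψ s)
    (hy : ∀ i, y i ∈ s) : 0 ≤ ∑ i, φ (y i) * (ψ (y (i + 1)) - ψ (y i)) := by
  simpa only [Pi.neg_apply, neg_mul, sum_neg_distrib, neg_nonpos] using
    sum_mul_sub_add_one_nonpos hφ.neg hψ hy

theorem sum_mul_sub_add_one_eq_zero_iff_of_strictAntiOn (hφ : StrictAntiOn φ s)
    (hψ : StrictMonoOn ψ s) (hy : ∀ i, y i ∈ s) :
    ∑ i, φ (y i) * (ψ (y (i + 1)) - ψ (y i)) = 0 ↔ ∀ i j, y i = y j := by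
  simpa only [Pi.neg_apply, neg_mul, sum_neg_distrib, neg_eq_zero] using
    sum_mul_sub_add_one_eq_zero_iff_of_strictMonoOn hφ.neg hψ hy

end Fin

theorem stmt_5_general (N : ℕ) [NeZero N]
    (y : Fin N → ℝ) (hy : ∀ i, 0 < y i) (m : ℝ) :
    (1 < m →
      m * ∑ i, y i ^ (m - 1) * (y (i + 1) ^ m - y i ^ m) ≤ 0 ∧
      ((m * ∑ i, y i ^ (m - 1) * (y (i + 1) ^ m - y i ^ m) = 0) ↔ ∀ i j, y i = y j)) ∧
    (0 < m → m < 1 →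
      0 ≤ m * ∑ i, y i ^ (m - 1) * (y (i + 1) ^ m - y i ^ m) ∧
      ((m * ∑ i, y i ^ (m - 1) * (y (i + 1) ^ m - y i ^ m) = 0) ↔ ∀ i j, y i = y j)) := by
  have rpow_strictMonoOn {r : ℝ} (hr : 0 < r) : StrictMonoOn (· ^ r) (Set.Ioi (0 : ℝ)) :=
    (Real.strictMonoOn_rpow_Ici_of_exponent_pos hr).mono Set.Ioi_subset_Ici_self
  refine ⟨fun hm ↦ ?_, fun hm₀ hm₁ ↦ ?_⟩
  · have hφ := rpow_strictMonoOn (sub_pos.2 hm)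
    have hψ := rpow_strictMonoOn (zero_lt_one.trans hm)
    exact ⟨mul_nonpos_of_nonneg_of_nonpos (by linarith)
        (Fin.sum_mul_sub_add_one_nonpos hφ.monotoneOn hψ.monotoneOn hy),
      (mul_eq_zero_iff_left (by linarith)).trans
        (Fin.sum_mul_sub_add_one_eq_zero_iff_of_strictMonoOn hφ hψ hy)⟩
  · have hφ := Real.strictAntiOn_rpow_Ioi_of_exponent_neg (sub_neg.2 hm₁)
    have hψ := rpow_strictMonoOn hm₀
    exact ⟨mul_nonneg hm₀.le (Fin.sum_mul_sub_add_one_nonneg hφ.antitoneOn hψ.monotoneOn hy),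
      (mul_eq_zero_iff_left hm₀.ne').trans
        (Fin.sum_mul_sub_add_one_eq_zero_iff_of_strictAntiOn hφ hψ hy)⟩

theorem stmt_5 (N : ℕ) [NeZero N] (L : ℝ) (hL : 0 < L)
    (y : Fin N → ℝ) (hy : ∀ i, 0 < y i) (hsum : ∑ i, y i = L) (m : ℝ) :
    (1 < m →
      m * ∑ i, y i ^ (m - 1) * (y (i + 1) ^ m - y i ^ m) ≤ 0 ∧
      ((m * ∑ i, y i ^ (m - 1) * (y (i + 1) ^ m - y i ^ m) = 0) ↔ ∀ i j, y i = y j)) ∧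
    (0 < m → m < 1 →
      0 ≤ m * ∑ i, y i ^ (m - 1) * (y (i + 1) ^ m - y i ^ m) ∧
      ((m * ∑ i, y i ^ (m - 1) * (y (i + 1) ^ m - y i ^ m) = 0) ↔ ∀ i j, y i = y j)) :=
  stmt_5_general N y hy m
end

section
/- For y ∈ ℝ_{++}^N with ∑ y_i = L, let f(y,m) = m ∑_{i=1}^N y_i^{m-1}(y_{i+1}^m − y_i^m) (cyclic indices). Then ∂f/∂m evaluated at m = 1 equals −L · D(y/L ‖ P⁻(y/L)), where D(p‖q) = ∑ p_i log(p_i/q_i) is the KL divergence and P⁻ is the cyclic shift sending (z_1,…,z_N) to (z_N, z_1, …, z_{N−1}). In particular ∂f/∂m|_{m=1} ≤ 0, with equality iff all y_i equal L/N. -/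
/-!
At `m = 1` the sum `∑ y_i^{m-1}(y_{i+1}^m - y_i^m)` telescopes to `0`, so the derivative of
`m ↦ f(y, m)` at `1` is that of the sum alone; differentiating `y^m` gives `y log y`, and after
re-indexing the cyclic sums what remains is `-∑ y_i log (y_i / y_{i-1})`.
Because `∑ (y_{i-1} - y_i) = 0`, this sum equals `∑ y_{i-1} klFun (y_i / y_{i-1})` with
`klFun x = x log x + 1 - x ≥ 0`, vanishing only at `x = 1`: it is nonnegative, and zero exactly
when `y` is invariant under the cyclic shift, i.e. constant.
-/

open Finset Real InformationTheory

lemma mul_sum_div_mul_log_div_div {ι : Type*} (s : Finset ι) {c : ℝ} (hc : c ≠ 0) (p q : ι → ℝ) :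
    c * ∑ i ∈ s, p i / c * log ((p i / c) / (q i / c)) = ∑ i ∈ s, p i * log (p i / q i) := by
  rw [mul_sum]
  refine sum_congr rfl fun i _ => ?_
  rw [div_div_div_cancel_right₀ hc, ← mul_assoc, mul_div_cancel₀ _ hc]

lemma hasDerivAt_rpow_sub_one_mul_rpow_sub_rpow {a b : ℝ} (ha : 0 < a) (hb : 0 < b) :
    HasDerivAt (fun m : ℝ => a ^ (m - 1) * (b ^ m - a ^ m))
      (log a * (b - a) + (b * log b - a * log a)) 1 := by
  have hpow {c : ℝ} (hc : 0 < c) (x : ℝ) : HasDerivAt (fun m : ℝ => c ^ m) (c ^ x * log c) x :=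
    (hasStrictDerivAt_const_rpow hc x).hasDerivAt
  have := ((hpow ha (1 - 1)).comp_sub_const 1 1).fun_mul ((hpow hb 1).fun_sub (hpow ha 1))
  simpa [rpow_one] using this

section Shift

variable {G : Type*} [AddGroup G] [Fintype G]

/-- For `a = 1` on `Fin N` and `∑ i, y i = L` this is `L · D(y/L ‖ P⁻(y/L))`. -/
noncomputable def shiftDivergence (a : G) (y : G → ℝ) : ℝ :=
  ∑ i, y i * log (y i / y (i - a))

lemma sum_comp_add_right (a : G) (F : G → ℝ) : ∑ i, F (i + a) = ∑ i, F i :=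
  Equiv.sum_comp (Equiv.addRight a) F

lemma sum_comp_sub_right (a : G) (F : G → ℝ) : ∑ i, F (i - a) = ∑ i, F i :=
  Equiv.sum_comp (Equiv.subRight a) F

lemma hasDerivAt_mul_sum_rpow_shift (a : G) {y : G → ℝ} (hy : ∀ i, 0 < y i) :
    HasDerivAt (fun m : ℝ => m * ∑ i, y i ^ (m - 1) * (y (i + a) ^ m - y i ^ m))
      (-shiftDivergence a y) 1 := by
  have hsum := HasDerivAt.fun_sum (u := univ) fun i _ =>
    hasDerivAt_rpow_sub_one_mul_rpow_sub_rpow (hy i) (hy (i + a))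
  have hvalue : ∑ i, y i ^ ((1 : ℝ) - 1) * (y (i + a) ^ (1 : ℝ) - y i ^ (1 : ℝ)) = 0 := by
    simp only [sub_self, rpow_zero, rpow_one, one_mul, sum_sub_distrib, sum_comp_add_right a y]
  have hderiv : ∑ i, (log (y i) * (y (i + a) - y i) +
      (y (i + a) * log (y (i + a)) - y i * log (y i))) = -shiftDivergence a y := by
    have hlog := sum_comp_add_right a fun j => y j * log (y (j - a))
    simp only [add_sub_cancel_right] at hlog
    simp only [shiftDivergence, log_div (hy _).ne' (hy _).ne', mul_sub, sum_sub_distrib,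
      sum_add_distrib, sum_comp_add_right a fun j => y j * log (y j)]
    rw [← hlog]
    simp only [mul_comm (log _)]
    ring
  have hprod := (hasDerivAt_id (1 : ℝ)).fun_mul hsum
  simp only [id, one_mul] at hprod
  rw [hvalue, hderiv, zero_add] at hprod
  exact hprod

lemma shiftDivergence_eq_sum_mul_klFun (a : G) {y : G → ℝ} (hy : ∀ i, 0 < y i) :
    shiftDivergence a y = ∑ i, y (i - a) * klFun (y i / y (i - a)) := by
  have hsum : ∑ i, (y (i - a) - y i) = 0 := by
    rw [sum_sub_distrib, sum_comp_sub_right a y, sub_self]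
  rw [shiftDivergence, ← add_zero (∑ i, _), ← hsum, ← sum_add_distrib]
  refine sum_congr rfl fun i _ => ?_
  have hne := (hy (i - a)).ne'
  rw [klFun_apply]
  field_simp
  ring

lemma shiftDivergence_nonneg (a : G) {y : G → ℝ} (hy : ∀ i, 0 < y i) :
    0 ≤ shiftDivergence a y := by
  rw [shiftDivergence_eq_sum_mul_klFun a hy]
  exact sum_nonneg fun i _ =>
    mul_nonneg (hy _).le (klFun_nonneg (div_pos (hy i) (hy _)).le)

lemma shiftDivergence_eq_zero_iff (a : G) {y : G → ℝ} (hy : ∀ i, 0 < y i) :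
    shiftDivergence a y = 0 ↔ ∀ i, y (i + a) = y i := by
  have hterm (i : G) : y (i - a) * klFun (y i / y (i - a)) = 0 ↔ y i = y (i - a) := by
    rw [mul_eq_zero_iff_left (hy _).ne', klFun_eq_zero_iff (div_pos (hy i) (hy _)).le,
      div_eq_one_iff_eq (hy _).ne']
  rw [shiftDivergence_eq_sum_mul_klFun a hy, sum_eq_zero_iff_of_nonneg fun i _ =>
    mul_nonneg (hy _).le (klFun_nonneg (div_pos (hy i) (hy _)).le)]
  simp only [mem_univ, true_implies, hterm]
  exact ⟨fun h i => by simpa using h (i + a), fun h i => by simpa using h (i - a)⟩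

end Shift

open Fin.NatCast in
lemma Fin.apply_eq_apply_zero_of_apply_add_one {N : ℕ} [NeZero N] {α : Type*} {f : Fin N → α}
    (hf : ∀ i, f (i + 1) = f i) (i : Fin N) : f i = f 0 := by
  have hnat (k : ℕ) : f k = f 0 := by
    induction k with
    | zero => simp
    | succ k ih => rw [Nat.cast_succ, hf, ih]
  simpa using hnat i

theorem stmt_9 (N : ℕ) [NeZero N] (L : ℝ) (hL : 0 < L)
    (y : Fin N → ℝ) (hy : ∀ i, 0 < y i) (hsum : ∑ i, y i = L) :
    HasDerivAt
      (fun m : ℝ => m * ∑ i, y i ^ (m - 1) * (y (i + 1) ^ m - y i ^ m))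
      (-(L * ∑ i, (y i / L) * Real.log ((y i / L) / (y (i - 1) / L)))) 1 ∧
    -(L * ∑ i, (y i / L) * Real.log ((y i / L) / (y (i - 1) / L))) ≤ 0 ∧
    ((-(L * ∑ i, (y i / L) * Real.log ((y i / L) / (y (i - 1) / L))) = 0) ↔
      ∀ i, y i = L / N) := by
  rw [mul_sum_div_mul_log_div_div _ hL.ne', ← shiftDivergence]
  refine ⟨hasDerivAt_mul_sum_rpow_shift 1 hy, neg_nonpos.2 (shiftDivergence_nonneg 1 hy), ?_⟩
  rw [neg_eq_zero, shiftDivergence_eq_zero_iff 1 hy]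
  constructor
  · intro hshift i
    have hconst := Fin.apply_eq_apply_zero_of_apply_add_one hshift
    have hN : (N : ℝ) ≠ 0 := Nat.cast_ne_zero.2 (NeZero.ne N)
    rw [← hsum, sum_congr rfl fun j _ => hconst j, hconst i]
    simp [field]
  · intro hconst i
    rw [hconst, hconst]
end

section
/- For all y ∈ ℝ_{++}^N with ∑ y_i = L and 0 < L < e^{−2}, the expression ∑_{i=1}^N (log y_i)^2 (y_{i+1} − y_i) + 2 ∑_{i=1}^N (log y_i)(y_{i+1} log y_{i+1} + y_{i+1} − y_i log y_i − y_i) (cyclic indices) is nonnegative, with equality iff all y_i are equal. -/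
open Finset

/-!
Every `yᵢ` lies in `(0, e⁻²]`, where `(log x)²` decreases while `x` increases, and `log x` increases
while `s(x) = x log x + x` decreases (`s' = log x + 2`). For such an oppositely monotone pair
`(F, G)`, the rearrangement inequality gives
`∑ F(yᵢ) (G(yᵢ₊₁) - G(yᵢ)) = ∑ F(yᵢ) G(yᵢ₊₁) - ∑ F(yᵢ) G(yᵢ) ≥ 0`, and the expression is the sum of
two such cyclic sums. If it vanishes, so does the first one, so by the equality case `(log y)²`
antivaries with the shifted sequence, i.e. `y` monovaries with its own shift; then
`∑ yᵢ yᵢ₊₁ = ∑ yᵢ²`, that is `∑ (yᵢ₊₁ - yᵢ)² = 0`.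
-/

section Rearrangement

variable {ι α : Type*} [Fintype ι] [CommRing α] [LinearOrder α] [IsStrictOrderedRing α]
  {f g : ι → α}

theorem Antivary.sum_mul_sub_comp_perm_nonneg (hfg : Antivary f g) (σ : Equiv.Perm ι) :
    0 ≤ ∑ i, f i * (g (σ i) - g i) := by
  simp only [mul_sub, sum_sub_distrib, sub_nonneg]
  exact hfg.sum_mul_le_sum_mul_comp_perm

theorem Antivary.sum_mul_sub_comp_perm_eq_zero_iff (hfg : Antivary f g) (σ : Equiv.Perm ι) :
    ∑ i, f i * (g (σ i) - g i) = 0 ↔ Antivary f (g ∘ σ) := by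
  simp only [mul_sub, sum_sub_distrib, sub_eq_zero]
  exact hfg.sum_mul_eq_sum_mul_comp_perm_iff

theorem Monovary.comp_perm_eq_self_s10 {x : ι → α} {σ : Equiv.Perm ι} (h : Monovary x (x ∘ σ)) :
    x ∘ σ = x := by
  have hcross : ∑ i, x i * x (σ i) = ∑ i, x i * x i :=
    (monovary_self x).sum_mul_comp_perm_eq_sum_mul_iff.2 h
  have hsq : ∑ i, x (σ i) * x (σ i) = ∑ i, x i * x i := Equiv.sum_comp σ fun i => x i * x i
  have hzero : ∑ i, (x (σ i) - x i) ^ 2 = 2 * (∑ i, x i * x i - ∑ i, x i * x (σ i)) := by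
    have hexpand (i : ι) :
        (x (σ i) - x i) ^ 2 = x (σ i) * x (σ i) + x i * x i - 2 * (x i * x (σ i)) := by
      ring
    simp only [hexpand, sum_sub_distrib, sum_add_distrib, ← mul_sum, hsq]
    ring
  rw [hcross, sub_self, mul_zero] at hzero
  funext i
  have := (sum_eq_zero_iff_of_nonneg fun i _ => sq_nonneg (x (σ i) - x i)).1 hzero i (mem_univ i)
  exact sub_eq_zero.1 (pow_eq_zero_iff two_ne_zero |>.1 this)

end Rearrangement

theorem Fin.forall_eq_of_forall_add_one_eq {α : Type*} {N : ℕ} [NeZero N] {x : Fin N → α}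
    (h : ∀ i, x (i + 1) = x i) (i j : Fin N) : x i = x j := by
  obtain ⟨n, rfl⟩ : ∃ n, N = n + 1 := Nat.exists_eq_succ_of_ne_zero (NeZero.ne N)
  suffices ∀ k, x k = x 0 by rw [this i, this j]
  intro k
  induction k using Fin.induction with
  | zero => rfl
  | succ k ih => rw [← Fin.coeSucc_eq_succ, h, ih]

open Real

theorem Real.strictAntiOn_log_sq : StrictAntiOn (fun x => log x ^ 2) (Set.Ioc 0 1) := by
  intro a ⟨ha, ha1⟩ b ⟨hb, hb1⟩ hab
  have hlog : log a < log b := log_lt_log ha hab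
  have hb0 : log b ≤ 0 := log_nonpos hb.le hb1
  dsimp only
  nlinarith

theorem Real.strictAntiOn_mul_log_add_self :
    StrictAntiOn (fun x => x * log x + x) (Set.Ioc 0 (exp (-2))) := by
  intro a ⟨ha, _⟩ b ⟨hb, hbe⟩ hab
  have hlogb : log b ≤ -2 := by simpa using log_le_log hb hbe
  -- `(b log b + b) - (a log a + a) = a log (b / a) + (b - a) (log b + 1)`
  have hratio : a * log (b / a) < b - a := by
    have := log_lt_sub_one_of_pos (div_pos hb ha) (ne_of_gt ((one_lt_div ha).2 hab))
    calc a * log (b / a) < a * (b / a - 1) := mul_lt_mul_of_pos_left this ha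
      _ = b - a := by field_simp
  rw [log_div hb.ne' ha.ne'] at hratio
  dsimp only
  nlinarith

theorem stmt_10_general (N : ℕ) [NeZero N] (L : ℝ) (hL : L < Real.exp (-2))
    (y : Fin N → ℝ) (hy : ∀ i, 0 < y i) (hsum : ∑ i, y i = L) :
    0 ≤ (∑ i, (Real.log (y i)) ^ 2 * (y (i + 1) - y i)) +
        2 * ∑ i, Real.log (y i) *
          (y (i + 1) * Real.log (y (i + 1)) + y (i + 1) - y i * Real.log (y i) - y i) ∧
    (((∑ i, (Real.log (y i)) ^ 2 * (y (i + 1) - y i)) +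
        2 * ∑ i, Real.log (y i) *
          (y (i + 1) * Real.log (y (i + 1)) + y (i + 1) - y i * Real.log (y i) - y i) = 0) ↔
      ∀ i j, y i = y j) := by
  have hyS (i : Fin N) : y i ∈ Set.Ioc 0 (exp (-2)) :=
    ⟨hy i, (hsum ▸ single_le_sum (fun j _ => (hy j).le) (mem_univ i)).trans hL.le⟩
  have hyS₁ (i : Fin N) : y i ∈ Set.Ioc 0 1 :=
    ⟨hy i, (hyS i).2.trans (exp_le_one_iff.2 (by norm_num))⟩
  have hanti₁ : Antivary (fun i => log (y i) ^ 2) y := fun i j hij =>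
    (strictAntiOn_log_sq.le_iff_ge (hyS₁ j) (hyS₁ i)).2 hij.le
  have hanti₂ : Antivary (fun i => log (y i)) (fun i => y i * log (y i) + y i) := fun i j hij =>
    log_le_log (hy j) ((strictAntiOn_mul_log_add_self.lt_iff_gt (hyS i) (hyS j)).1 hij).le
  have hnonneg₁ : 0 ≤ ∑ i, log (y i) ^ 2 * (y (i + 1) - y i) :=
    hanti₁.sum_mul_sub_comp_perm_nonneg (Equiv.addRight 1)
  have hnonneg₂ : 0 ≤ ∑ i, log (y i) *
      (y (i + 1) * log (y (i + 1)) + y (i + 1) - y i * log (y i) - y i) := by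
    simpa only [Equiv.coe_addRight, sub_sub] using
      hanti₂.sum_mul_sub_comp_perm_nonneg (Equiv.addRight 1)
  refine ⟨by linarith, fun hzero => ?_, fun hconst => ?_⟩
  · have hshift : Antivary (fun i => log (y i) ^ 2) (y ∘ Equiv.addRight 1) :=
      (hanti₁.sum_mul_sub_comp_perm_eq_zero_iff _).1
        (by linarith : ∑ i, log (y i) ^ 2 * (y (i + 1) - y i) = 0)
    have hmono : Monovary y (y ∘ Equiv.addRight 1) := fun i j hij =>
      (strictAntiOn_log_sq.le_iff_ge (hyS₁ j) (hyS₁ i)).1 (hshift hij)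
    exact Fin.forall_eq_of_forall_add_one_eq (congrFun hmono.comp_perm_eq_self_s10)
  · simp [hconst _ 0]

theorem stmt_10 (N : ℕ) [NeZero N] (L : ℝ) (hL0 : 0 < L) (hL : L < Real.exp (-2))
    (y : Fin N → ℝ) (hy : ∀ i, 0 < y i) (hsum : ∑ i, y i = L) :
    0 ≤ (∑ i, (Real.log (y i)) ^ 2 * (y (i + 1) - y i)) +
        2 * ∑ i, Real.log (y i) *
          (y (i + 1) * Real.log (y (i + 1)) + y (i + 1) - y i * Real.log (y i) - y i) ∧
    (((∑ i, (Real.log (y i)) ^ 2 * (y (i + 1) - y i)) +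
        2 * ∑ i, Real.log (y i) *
          (y (i + 1) * Real.log (y (i + 1)) + y (i + 1) - y i * Real.log (y i) - y i) = 0) ↔
      ∀ i j, y i = y j) :=
  stmt_10_general N L hL y hy hsum
end

section
/- Consider the car-following system ẋ_i = (x_{i+1} − x_i)^m for i = 1,…,N−1 and ẋ_N given analogously, on ℝ_+^N with ordered coordinates and gaps at most L ≤ 1. If x¹(0) ≤ x²(0) componentwise and 0 < m_2 ≤ m_1, then the solutions satisfy X(t; x¹(0), m_1) ≤ X(t; x²(0), m_2) componentwise for all t ≥ 0 in an interval where both solutions exist. -/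
open Set

/-- Inter-vehicle gap on a circle of length `L`: the gap in front of vehicle `i`
is `x (i+1) - x i` for `i < N - 1`, and `x 0 + L - x (N-1)` for the last vehicle
(the wrap-around gap). -/
def gap {N : ℕ} [NeZero N] (L : ℝ) (x : Fin N → ℝ) (i : Fin N) : ℝ :=
  x (i + 1) - x i + (if (i : ℕ) + 1 = N then L else 0)

/-!
The velocity field depends on the positions only through the gaps, so it is invariant under
translating all vehicles by the same amount, and it is cooperative: where the first
configuration touches the (translated) second one from below, the gap in front of the touching
vehicle is smaller in the first configuration. Since gaps lie in `[0, L] ⊆ [0, 1]`, also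
`y₁ ^ m₁ ≤ y₁ ^ m₂ ≤ y₂ ^ m₂`, so the first vehicle is no faster at a contact. The field is
not Lipschitz (for `m < 1`), so instead of uniqueness we compare `x₁` with the strict
supersolution `x₂ + ε (t + 1)` by continuous induction on time and then let `ε → 0`.
-/

open Filter Topology

theorem eventually_nhdsGT_le_of_hasDerivAt {f g : ℝ → ℝ} {f' g' x : ℝ}
    (hf : HasDerivAt f f' x) (hg : HasDerivAt g g' x) (hle : f x ≤ g x)
    (hlt : f x = g x → f' < g') : ∀ᶠ y in 𝓝[>] x, f y ≤ g y := by
  rcases hle.lt_or_eq with hlt' | heq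
  · exact ((hf.continuousAt.eventually_lt hg.continuousAt hlt').filter_mono
      nhdsWithin_le_nhds).mono fun _ => le_of_lt
  · have hslope := (hasDerivAt_iff_tendsto_slope.1 (hg.sub hf)).mono_left (nhdsGT_le_nhdsNE x)
    filter_upwards [hslope.eventually (eventually_gt_nhds (sub_pos.2 (hlt heq))),
      self_mem_nhdsWithin] with y hy hxy
    rw [slope_pos_iff hxy] at hy
    simp only [Pi.sub_apply] at hy
    linarith

section Comparison

variable {ι : Type*} [Finite ι] {u v u' v' : ℝ → ι → ℝ} {a b : ℝ}

theorem le_of_hasDerivAt_lt_at_contact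
    (hu : ∀ i, ∀ t ∈ Ico a b, HasDerivAt (fun s => u s i) (u' t i) t)
    (hv : ∀ i, ∀ t ∈ Ico a b, HasDerivAt (fun s => v s i) (v' t i) t) (ha : u a ≤ v a)
    (hcontact : ∀ t ∈ Ico a b, u t ≤ v t → ∀ i, u t i = v t i → u' t i < v' t i) :
    ∀ t ∈ Ico a b, u t ≤ v t := by
  intro t ht
  have hsub : Icc a t ⊆ Ico a b := Icc_subset_Ico_right ht.2
  have hcont {w w' : ℝ → ι → ℝ}
      (hw : ∀ i, ∀ t ∈ Ico a b, HasDerivAt (fun s => w s i) (w' t i) t) :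
      ContinuousOn w (Icc a t) := fun s hs =>
    (continuousAt_pi.2 fun i => (hw i s (hsub hs)).continuousAt).continuousWithinAt
  have hclosed : IsClosed ({s | u s ≤ v s} ∩ Icc a t) := by
    rw [inter_comm]
    exact ((hcont hu).prodMk (hcont hv)).preimage_isClosed_of_isClosed isClosed_Icc
      OrderClosedTopology.isClosed_le'
  refine hclosed.Icc_subset_of_forall_mem_nhdsWithin ha (fun s ⟨hs, hsI⟩ => ?_)
    (right_mem_Icc.2 ht.1)
  have hsI' : s ∈ Ico a b := hsub (Ico_subset_Icc_self hsI)
  exact eventually_all.2 fun i => eventually_nhdsGT_le_of_hasDerivAt (hu i s hsI') (hv i s hsI')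
    (hs i) (hcontact s hsI' hs i)

theorem le_of_hasDerivAt_le_at_contact_add
    (hu : ∀ i, ∀ t ∈ Ico a b, HasDerivAt (fun s => u s i) (u' t i) t)
    (hv : ∀ i, ∀ t ∈ Ico a b, HasDerivAt (fun s => v s i) (v' t i) t) (ha : u a ≤ v a)
    (hcontact : ∀ t ∈ Ico a b, ∀ c > 0, (∀ i, u t i ≤ v t i + c) →
      ∀ i, u t i = v t i + c → u' t i ≤ v' t i) :
    ∀ t ∈ Ico a b, u t ≤ v t := by
  intro t ht i
  refine le_of_forall_pos_le_add fun δ hδ => ?_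
  set ε := δ / (t - a + 1)
  have hε : 0 < ε := div_pos hδ (by linarith [ht.1])
  have hshift : ∀ s, HasDerivAt (fun s => ε * (s - a + 1)) ε s := fun s => by
    simpa using (((hasDerivAt_id s).sub_const a).add_const 1).const_mul ε
  have hcomp := le_of_hasDerivAt_lt_at_contact (v := fun s j => v s j + ε * (s - a + 1))
    (v' := fun s j => v' s j + ε) hu (fun j s hs => (hv j s hs).add (hshift s))
    (fun j => by simpa using (ha j).trans (le_add_of_nonneg_right hε.le))
    (fun s hs hle j heq => lt_add_of_le_of_pos
      (hcontact s hs _ (mul_pos hε (by linarith [hs.1])) hle j heq) hε)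
  simpa [ε, div_mul_cancel₀ δ (by linarith [ht.1] : t - a + 1 ≠ 0)] using hcomp t ht i

end Comparison

theorem gap_le_gap_of_le_add {N : ℕ} [NeZero N] {L c : ℝ} {x y : Fin N → ℝ} {k : Fin N}
    (hle : ∀ i, x i ≤ y i + c) (heq : x k = y k + c) : gap L x k ≤ gap L y k := by
  have := hle (k + 1)
  simp only [gap]
  linarith

theorem stmt_17_general {N : ℕ} [NeZero N] (L m₁ m₂ τ : ℝ)
    (hL : L ≤ 1) (hm₂ : 0 < m₂) (hm : m₂ ≤ m₁)
    (x₁ x₂ : ℝ → Fin N → ℝ)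
    (hgap₁ : ∀ t ∈ Ico (0 : ℝ) τ, ∀ i, 0 ≤ gap L (x₁ t) i ∧ gap L (x₁ t) i ≤ L)
    (hode₁ : ∀ i, ∀ t ∈ Ico (0 : ℝ) τ,
      HasDerivAt (fun s => x₁ s i) (gap L (x₁ t) i ^ m₁) t)
    (hode₂ : ∀ i, ∀ t ∈ Ico (0 : ℝ) τ,
      HasDerivAt (fun s => x₂ s i) (gap L (x₂ t) i ^ m₂) t)
    (h0 : ∀ i, x₁ 0 i ≤ x₂ 0 i) :
    ∀ t ∈ Ico (0 : ℝ) τ, ∀ i, x₁ t i ≤ x₂ t i :=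
  le_of_hasDerivAt_le_at_contact_add hode₁ hode₂ h0 fun t ht _ _ hle k heq => by
    obtain ⟨hgap_nonneg, hgap_le⟩ := hgap₁ t ht k
    calc gap L (x₁ t) k ^ m₁ ≤ gap L (x₁ t) k ^ m₂ :=
          Real.rpow_le_rpow_of_exponent_ge' hgap_nonneg (hgap_le.trans hL) hm₂.le hm
      _ ≤ gap L (x₂ t) k ^ m₂ :=
          Real.rpow_le_rpow hgap_nonneg (gap_le_gap_of_le_add hle heq) hm₂.le

theorem stmt_17 {N : ℕ} [NeZero N] (L m₁ m₂ τ : ℝ)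
    (hL0 : 0 < L) (hL : L ≤ 1) (hm₂ : 0 < m₂) (hm : m₂ ≤ m₁)
    (x₁ x₂ : ℝ → Fin N → ℝ)
    (hx₁ : ∀ t ∈ Ico (0 : ℝ) τ, ∀ i, 0 ≤ x₁ t i)
    (hx₂ : ∀ t ∈ Ico (0 : ℝ) τ, ∀ i, 0 ≤ x₂ t i)
    (hgap₁ : ∀ t ∈ Ico (0 : ℝ) τ, ∀ i, 0 ≤ gap L (x₁ t) i ∧ gap L (x₁ t) i ≤ L)
    (hgap₂ : ∀ t ∈ Ico (0 : ℝ) τ, ∀ i, 0 ≤ gap L (x₂ t) i ∧ gap L (x₂ t) i ≤ L)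
    (hode₁ : ∀ i, ∀ t ∈ Ico (0 : ℝ) τ,
      HasDerivAt (fun s => x₁ s i) (gap L (x₁ t) i ^ m₁) t)
    (hode₂ : ∀ i, ∀ t ∈ Ico (0 : ℝ) τ,
      HasDerivAt (fun s => x₂ s i) (gap L (x₂ t) i ^ m₂) t)
    (h0 : ∀ i, x₁ 0 i ≤ x₂ 0 i) :
    ∀ t ∈ Ico (0 : ℝ) τ, ∀ i, x₁ t i ≤ x₂ t i :=
  stmt_17_general L m₁ m₂ τ hL hm₂ hm x₁ x₂ hgap₁ hode₁ hode₂ h0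
end
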